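/- Let A = [[1, 1], [0, 1]] and B = [[1, 0], [1, 1]] be 2×2 integer matrices, and let M be any product of matrices each of the form Aⁿ·Bᵐ with n, m positive integers. Then trace(M) > 0. -/

import Mathlib

/-!
A and B have nonnegative entries and ones on the diagonal, and this property is preserved by
products: `(M * N) i i ≥ M i i * N i i ≥ 1` because every other summand is nonnegative. Hence every
such product has trace at least 2.
-/

namespace Matrix

variable (n R : Type*) [Fintype n] [DecidableEq n] [Semiring R] [PartialOrder R] [IsOrderedRing R]

def nonnegOneLeDiagSubmonoid : Submonoid (Matrix n n R) where
  carrier := {M | (∀ i j, 0 ≤ M i j) ∧ ∀ i, 1 ≤ M i i}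
  one_mem' := by
    refine ⟨fun i j => ?_, fun i => by simp⟩
    rw [one_apply]
    split_ifs <;> simp
  mul_mem' := by
    rintro M N ⟨hM, hMd⟩ ⟨hN, hNd⟩
    refine ⟨fun i j => Finset.sum_nonneg fun k _ => mul_nonneg (hM i k) (hN k j), fun i => ?_⟩
    calc (1 : R) ≤ M i i * N i i := one_le_mul_of_one_le_of_one_le (hMd i) (hNd i)
      _ ≤ (M * N) i i :=
        Finset.single_le_sum (f := fun k => M i k * N k i)
          (fun k _ => mul_nonneg (hM i k) (hN k i)) (Finset.mem_univ i)

variable {n R}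

theorem card_le_trace_of_mem_nonnegOneLeDiagSubmonoid {M : Matrix n n R}
    (hM : M ∈ nonnegOneLeDiagSubmonoid n R) : (Fintype.card n : R) ≤ M.trace := by
  simpa [trace] using Finset.sum_le_sum fun i (_ : i ∈ Finset.univ) => hM.2 i

end Matrix

open Matrix in
theorem stmt_7_general (A B : Matrix (Fin 2) (Fin 2) ℤ)
    (hA : A = !![1, 1; 0, 1]) (hB : B = !![1, 0; 1, 1])
    (L : List (ℕ × ℕ)) :
    0 < Matrix.trace ((L.map (fun nm => A ^ nm.1 * B ^ nm.2)).prod) := by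
  have hA_mem : A ∈ nonnegOneLeDiagSubmonoid (Fin 2) ℤ := by
    subst hA
    exact ⟨fun i j => by fin_cases i <;> fin_cases j <;> simp, fun i => by fin_cases i <;> simp⟩
  have hB_mem : B ∈ nonnegOneLeDiagSubmonoid (Fin 2) ℤ := by
    subst hB
    exact ⟨fun i j => by fin_cases i <;> fin_cases j <;> simp, fun i => by fin_cases i <;> simp⟩
  have hprod : (L.map (fun nm => A ^ nm.1 * B ^ nm.2)).prod ∈ nonnegOneLeDiagSubmonoid (Fin 2) ℤ :=
    Submonoid.list_prod_mem _ fun M hM => by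
      obtain ⟨nm, -, rfl⟩ := List.mem_map.1 hM
      exact mul_mem (pow_mem hA_mem _) (pow_mem hB_mem _)
  have htrace := card_le_trace_of_mem_nonnegOneLeDiagSubmonoid hprod
  simp only [Fintype.card_fin, Nat.cast_ofNat] at htrace
  omega

theorem stmt_7 (A B : Matrix (Fin 2) (Fin 2) ℤ)
    (hA : A = !![1, 1; 0, 1]) (hB : B = !![1, 0; 1, 1])
    (L : List (ℕ × ℕ)) (hL : ∀ nm ∈ L, 1 ≤ nm.1 ∧ 1 ≤ nm.2) :
    0 < Matrix.trace ((L.map (fun nm => A ^ nm.1 * B ^ nm.2)).prod) :=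
  stmt_7_general A B hA hB L
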